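/- arXiv:2503.06432 — 2 statements merged into one kernel-verified Lean document; each statement's English description precedes it below -/
import Mathlib

section
/- For each n with 1 ≤ n ≤ p, the chambers x₁C and e_nC lie on the same side of H_n (no point of x₁C is separated from a point of e_nC by H_n). -/
/-!
Write `α := α_{s_{i_n}}`, so that `H_n = H_{x_n α}`. For a chamber `zC` the pairing of `z f₀`
(`f₀ ∈ C`) with `x_n α` is `⟨f₀, z⁻¹ x_n α⟩`, which is positive as soon as `s_{i_n}` is not a right
descent of `z⁻¹ x_n`: then `z⁻¹ x_n α` is a nonzero nonnegative combination of simple roots. That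
positivity of roots is proved by induction on length, splitting off a maximal alternating suffix
in two generators and computing explicitly in the dihedral group they generate.

Both chambers are then on the positive side of `H_n`. For `z = x₁`, `z⁻¹ x_n = s_{i₁} ⋯ s_{i_n - 1}`
is a segment of the reduced word `ω` that stays reduced when `s_{i_n}` is appended. For
`z = e_n`, induction gives `x_n = e_{n-1} x′_n`, hence `e_n⁻¹ x_n = x′_n s_{i_n}`, and `s_{i_n}`
is a right descent of `x′_n` by hypothesis.
-/

noncomputable section

namespace PaperBound

variable {B : Type} {W : Type} [Group W]

/-- The value `B(α_i, α_j)` of the canonical symmetric bilinear form on simple roots: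
`-cos (π / m i j)` if `m i j ≠ ∞` (encoded as `M i j ≠ 0`) and `-1` otherwise. -/
def cB (M : CoxeterMatrix B) (i j : B) : ℝ :=
  if M i j = 0 then -1 else - Real.cos (Real.pi / (M i j : ℝ))

/-- The canonical symmetric bilinear form on `V = B → ℝ` (coordinates in the basis of
simple roots `Δ = {α_i}`). -/
def bform [Fintype B] (M : CoxeterMatrix B) (u v : B → ℝ) : ℝ :=
  ∑ i, ∑ j, u i * v j * cB M i j

/-- The natural pairing `⟨-,-⟩ : V* × V → ℝ`, where both `V` and `V*` are modelled as
`B → ℝ` (coordinates of `V*` taken in the dual basis of `Δ`). -/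
def pair [Fintype B] (f v : B → ℝ) : ℝ := ∑ i, f i * v i

/-- The simple root `α_i ∈ V`. -/
def sroot [DecidableEq B] (i : B) : B → ℝ := Pi.single i 1

/-- `ρ` is the geometric representation of `W` on `V = B → ℝ`:
`s_i · v = v - 2 B(α_i, v) α_i`. -/
def IsGeomRep [Fintype B] [DecidableEq B] (M : CoxeterMatrix B) (cs : CoxeterSystem M W)
    (ρ : W →* (B → ℝ) ≃ₗ[ℝ] (B → ℝ)) : Prop :=
  ∀ (i : B) (v : B → ℝ), ρ (cs.simple i) v = v - (2 * bform M (sroot i) v) • sroot i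

/-- `π` is the contragredient representation of `W` on `V* = B → ℝ`:
`⟨w·f, w·v⟩ = ⟨f, v⟩`. -/
def IsContraRep [Fintype B] (ρ : W →* (B → ℝ) ≃ₗ[ℝ] (B → ℝ))
    (π : W →* (B → ℝ) ≃ₗ[ℝ] (B → ℝ)) : Prop :=
  ∀ (w : W) (f v : B → ℝ), pair (π w f) (ρ w v) = pair f v

/-- The set `Φ⁺` of positive roots: roots (elements of the orbit of the simple roots)
all of whose coordinates in the basis `Δ` are nonnegative. -/
def PhiPos [Fintype B] [DecidableEq B] (ρ : W →* (B → ℝ) ≃ₗ[ℝ] (B → ℝ)) : Set (B → ℝ) :=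
  {α | (∃ (w : W) (i : B), α = ρ w (sroot i)) ∧ ∀ j, 0 ≤ α j}

/-- The hyperplane `H_α = {f ∈ V* : ⟨f, α⟩ = 0}`. -/
def hyp [Fintype B] (α : B → ℝ) : Set (B → ℝ) := {f | pair f α = 0}

/-- The set `𝔓 = {H_α : α ∈ Φ⁺}` of hyperplanes. -/
def Planes [Fintype B] [DecidableEq B] (ρ : W →* (B → ℝ) ≃ₗ[ℝ] (B → ℝ)) :
    Set (Set (B → ℝ)) :=
  {H | ∃ α ∈ PhiPos (W := W) ρ, H = hyp α}

/-- The (open) dominant chamber `C = {f ∈ V* : ⟨f, α_i⟩ > 0 for all i}`. -/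
def domCham (B : Type) [Fintype B] [DecidableEq B] : Set (B → ℝ) :=
  {f | ∀ i : B, 0 < pair f (sroot i)}

/-- The Tits cone `U = ⋃_{w ∈ W} w · (closure of C)`. -/
def titsCone [Fintype B] [DecidableEq B] (π : W →* (B → ℝ) ≃ₗ[ℝ] (B → ℝ)) :
    Set (B → ℝ) :=
  ⋃ w : W, (π w) '' closure (domCham B)

/-- `A ⩀ B := A ∩ B ∩ U°`, where `U°` is the interior of the Tits cone. -/
def dcap [Fintype B] [DecidableEq B] (π : W →* (B → ℝ) ≃ₗ[ℝ] (B → ℝ))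
    (A A' : Set (B → ℝ)) : Set (B → ℝ) :=
  A ∩ A' ∩ interior (titsCone π)

/-- A set `𝔔` of hyperplanes is intersecting if `H₁ ⩀ H₂ ≠ ∅` for all `H₁, H₂ ∈ 𝔔`. -/
def Intersecting [Fintype B] [DecidableEq B] (π : W →* (B → ℝ) ≃ₗ[ℝ] (B → ℝ))
    (Q : Set (Set (B → ℝ))) : Prop :=
  ∀ H₁ ∈ Q, ∀ H₂ ∈ Q, (dcap π H₁ H₂).Nonempty

/-- The chamber `wC ⊆ V*`. -/
def cham [Fintype B] [DecidableEq B] (π : W →* (B → ℝ) ≃ₗ[ℝ] (B → ℝ)) (w : W) :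
    Set (B → ℝ) :=
  (π w) '' domCham B

/-- The hyperplane with root `α` separates `f, g ∈ V*`: `⟨f, α⟩⟨g, α⟩ < 0`. -/
def SepPt [Fintype B] (α f g : B → ℝ) : Prop := pair f α * pair g α < 0

/-- The hyperplane with root `α` separates the subsets `A, A'` of `V*`: every point of
`A ∪ A'` lies off the hyperplane, and every point of `A` is separated from every point
of `A'`. -/
def SepSets [Fintype B] (α : B → ℝ) (A A' : Set (B → ℝ)) : Prop :=
  (∀ f ∈ A ∪ A', pair f α ≠ 0) ∧ ∀ f ∈ A, ∀ g ∈ A', SepPt α f g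

/-- The subset `A ⊆ V*` lies entirely on one side of the hyperplane with root `α`. -/
def OneSide [Fintype B] (α : B → ℝ) (A : Set (B → ℝ)) : Prop :=
  (∀ f ∈ A, pair f α ≠ 0) ∧ ∀ f ∈ A, ∀ g ∈ A, ¬ SepPt α f g

/-- The hyperplane `H ∈ 𝔓` separates the subsets `A, A'` of `V*` (expressed via a
positive root `α` with `H = H_α`; this does not depend on the choice of `α`). -/
def SepSetsH [Fintype B] [DecidableEq B] (ρ : W →* (B → ℝ) ≃ₗ[ℝ] (B → ℝ))
    (H : Set (B → ℝ)) (A A' : Set (B → ℝ)) : Prop :=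
  ∃ α ∈ PhiPos (W := W) ρ, H = hyp α ∧ SepSets α A A'


/-- The open half-space bounded by the hyperplane with root `α` on the side not containing
the chamber `wC`. -/
def halfNeg [Fintype B] [DecidableEq B] (π : W →* (B → ℝ) ≃ₗ[ℝ] (B → ℝ)) (w : W)
    (α : B → ℝ) : Set (B → ℝ) :=
  {f | ∀ f₀ ∈ cham π w, pair f α * pair f₀ α < 0}

/-- Auxiliary recursion producing the sets `𝔄_i` (first component) together with the
cumulative unions `𝔄₀ ∪ ⋯ ∪ 𝔄_i` (second component), starting from `𝔄₀ = A0`: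
`𝔄_{i+1} = {P ∈ Q ∖ (𝔄₀ ∪ ⋯ ∪ 𝔄_i) : P ⩀ σ(R) = ∅ for some R ∈ 𝔄_i}`. -/
def AseqAux [Fintype B] [DecidableEq B] (π : W →* (B → ℝ) ≃ₗ[ℝ] (B → ℝ))
    (Q : Set (Set (B → ℝ))) (σ : W) (A0 : Set (Set (B → ℝ))) :
    ℕ → Set (Set (B → ℝ)) × Set (Set (B → ℝ))
  | 0 => (A0, A0)
  | i + 1 =>
    let prev := AseqAux π Q σ A0 i
    ({P | P ∈ Q ∧ P ∉ prev.2 ∧ ∃ R ∈ prev.1, dcap π P ((π σ) '' R) = ∅},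
      prev.2 ∪ {P | P ∈ Q ∧ P ∉ prev.2 ∧ ∃ R ∈ prev.1, dcap π P ((π σ) '' R) = ∅})

/-- The set `𝔄_i`. -/
def Aseq [Fintype B] [DecidableEq B] (π : W →* (B → ℝ) ≃ₗ[ℝ] (B → ℝ))
    (Q : Set (Set (B → ℝ))) (σ : W) (A0 : Set (Set (B → ℝ))) (i : ℕ) :
    Set (Set (B → ℝ)) :=
  (AseqAux π Q σ A0 i).1

section Words

variable {M : CoxeterMatrix B}

/-- The element `x′_n = x s₁ ⋯ ŝ_{i₁} ⋯ ŝ_{i_{n−1}} ⋯ s_{i_n − 1}`: the product of `x` and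
the first `i_n - 1` letters of the word `ω`, with the letters at positions `i₁, …, i_{n−1}`
omitted. (Positions are recorded `0`-based: the index `ι n : Fin ω.length` corresponds to
the letter `s_{i_{n+1}}` of the paper.) -/
def omitProd (cs : CoxeterSystem M W) (x : W) (ω : List B) {p : ℕ}
    (ι : Fin p → Fin ω.length) (n : Fin p) : W :=
  x * cs.wordProd (((List.finRange ω.length).filter
      (fun j : Fin ω.length => decide ((j : ℕ) < (ι n : ℕ) ∧ ∀ m : Fin p, m < n → j ≠ ι m))).map ω.get)

/-- The condition `ℓ(x′_n s_{i_n}) < ℓ(x′_n)` for all `n = 1, …, p`. -/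
def DescCond (cs : CoxeterSystem M W) (x : W) (ω : List B) {p : ℕ}
    (ι : Fin p → Fin ω.length) : Prop :=
  ∀ n : Fin p, cs.length (omitProd cs x ω ι n * cs.simple (ω.get (ι n))) <
    cs.length (omitProd cs x ω ι n)

/-- The element `x_n := x s₁ ⋯ s_{i_n − 1}`. -/
def xseq (cs : CoxeterSystem M W) (x : W) (ω : List B) {p : ℕ}
    (ι : Fin p → Fin ω.length) (n : Fin p) : W :=
  x * cs.wordProd (ω.take (ι n))

/-- The reflection `σ_n := x_n s_{i_n} x_n⁻¹`. -/
def sigmaseq (cs : CoxeterSystem M W) (x : W) (ω : List B) {p : ℕ}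
    (ι : Fin p → Fin ω.length) (n : Fin p) : W :=
  xseq cs x ω ι n * cs.simple (ω.get (ι n)) * (xseq cs x ω ι n)⁻¹

/-- The element `e_n := σ_n σ_{n−1} ⋯ σ₁`, with `e₀ = e`. -/
def eseq (cs : CoxeterSystem M W) (x : W) (ω : List B) {p : ℕ}
    (ι : Fin p → Fin ω.length) : ℕ → W
  | 0 => 1
  | n + 1 => (if h : n < p then sigmaseq cs x ω ι ⟨n, h⟩ else 1) * eseq cs x ω ι n

/-- A root of the hyperplane `H_n` corresponding to the reflection `σ_n`, namely
`x_n · α_{s_{i_n}}`. -/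
def rootseq [Fintype B] [DecidableEq B] (cs : CoxeterSystem M W)
    (ρ : W →* (B → ℝ) ≃ₗ[ℝ] (B → ℝ)) (x : W) (ω : List B) {p : ℕ}
    (ι : Fin p → Fin ω.length) (n : Fin p) : B → ℝ :=
  ρ (xseq cs x ω ι n) (sroot (ω.get (ι n)))

/-- The hyperplane `H_n ∈ 𝔓` corresponding to the reflection `σ_n`. -/
def Hseq [Fintype B] [DecidableEq B] (cs : CoxeterSystem M W)
    (ρ : W →* (B → ℝ) ≃ₗ[ℝ] (B → ℝ)) (x : W) (ω : List B) {p : ℕ}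
    (ι : Fin p → Fin ω.length) (n : Fin p) : Set (B → ℝ) :=
  hyp (rootseq cs ρ x ω ι n)

end Words

end PaperBound

namespace List

variable {α : Type*}

lemma mem_drop_take_finRange_iff {L a b : ℕ} {j : Fin L} :
    j ∈ ((finRange L).take b).drop a ↔ a ≤ j ∧ j < b := by
  simp only [mem_drop_iff_getElem, getElem_take, getElem_finRange, length_take, length_finRange]
  constructor
  · rintro ⟨k, hk, rfl⟩
    simp only [Fin.cast_mk]
    omega
  · intro h
    exact ⟨j - a, by omega, Fin.ext (by simp only [Fin.cast_mk]; omega)⟩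

lemma map_get_filter_finRange_of_iff (ω : List α) {p : Fin ω.length → Bool} {a b : ℕ}
    (hp : ∀ j, p j ↔ a ≤ j ∧ j < b) :
    ((finRange ω.length).filter p).map ω.get = (ω.take b).drop a := by
  conv_rhs => rw [← map_get_finRange ω, ← map_take, ← map_drop]
  congr 1
  refine ((pairwise_lt_finRange _).filter p).eq_of_mem_iff
    ((pairwise_lt_finRange _).sublist ((drop_sublist _ _).trans (take_sublist _ _))) fun j ↦ ?_
  rw [mem_drop_take_finRange_iff, mem_filter, hp]
  simp

lemma filter_finRange_eq_append {L c : ℕ} {p q r : Fin L → Bool}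
    (hr : ∀ j, r j = (p j || q j)) (hp : ∀ j, p j → j < c) (hq : ∀ j, q j → c ≤ j) :
    (finRange L).filter r = (finRange L).filter p ++ (finRange L).filter q := by
  refine ((pairwise_lt_finRange L).filter r).eq_of_mem_iff ?_ fun j ↦ ?_
  · refine pairwise_append.mpr ⟨(pairwise_lt_finRange L).filter p,
      (pairwise_lt_finRange L).filter q, fun a ha b hb ↦ ?_⟩
    have := hp a (mem_filter.mp ha).2
    have := hq b (mem_filter.mp hb).2
    exact Fin.lt_def.mpr (by omega)
  · simp [hr]

end List

namespace CoxeterSystem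

variable {B W : Type*} [Group W] {M : CoxeterMatrix B} (cs : CoxeterSystem M W)

lemma wordProd_take_inv_mul_wordProd_take (ω : List B) {a b : ℕ} (hab : a ≤ b) :
    (cs.wordProd (ω.take a))⁻¹ * cs.wordProd (ω.take b) = cs.wordProd ((ω.take b).drop a) := by
  have hprefix : ω.take a = (ω.take b).take a := by rw [List.take_take, min_eq_left hab]
  rw [inv_mul_eq_iff_eq_mul, ← wordProd_append, hprefix, List.take_append_drop]

lemma wordProd_take_eq (ω : List B) {a b : ℕ} (hab : a < b) (hb : b ≤ ω.length) :
    cs.wordProd (ω.take b)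
      = cs.wordProd (ω.take a) * cs.simple ω[a] * cs.wordProd ((ω.take b).drop (a + 1)) := by
  have h := cs.wordProd_take_inv_mul_wordProd_take ω hab.le
  rw [inv_mul_eq_iff_eq_mul] at h
  rw [h, List.drop_eq_getElem_cons (by simp; omega), wordProd_cons, List.getElem_take, mul_assoc]

lemma not_isRightDescent_of_isReduced_append_singleton {ω : List B} {i : B}
    (h : cs.IsReduced (ω ++ [i])) : ¬ cs.IsRightDescent (cs.wordProd ω) i := by
  have hle := cs.length_wordProd_le ω
  have hred : cs.length (cs.wordProd ω * cs.simple i) = ω.length + 1 := by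
    rw [← wordProd_singleton, ← wordProd_append, h.eq, List.length_append, List.length_singleton]
  unfold IsRightDescent
  omega

lemma not_isRightDescent_wordProd_take {ω : List B} (hω : cs.IsReduced ω) {a b : ℕ}
    (hab : a ≤ b) (hb : b < ω.length) :
    ¬ cs.IsRightDescent ((cs.wordProd (ω.take a))⁻¹ * cs.wordProd (ω.take b)) ω[b] := by
  rw [cs.wordProd_take_inv_mul_wordProd_take ω hab]
  apply cs.not_isRightDescent_of_isReduced_append_singleton
  rw [← List.drop_append_of_le_length (by simp; omega), List.take_concat_get']
  exact (hω.take (b + 1)).drop a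

lemma not_isRightDescent_of_alternatingSuffix_maximal {w : W} {i j : B} {q : ℕ} (hq : 1 ≤ q)
    (h : cs.length (w * (cs.wordProd (alternatingWord i j q))⁻¹) + q = cs.length w)
    (hmax : cs.length (w * (cs.wordProd (alternatingWord i j (q + 1)))⁻¹) + (q + 1)
      ≠ cs.length w) :
    ¬ cs.IsRightDescent (w * (cs.wordProd (alternatingWord i j q))⁻¹) i ∧
      ¬ cs.IsRightDescent (w * (cs.wordProd (alternatingWord i j q))⁻¹) j := by
  obtain ⟨q, rfl⟩ := Nat.exists_eq_add_of_le' hq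
  set v := w * (cs.wordProd (alternatingWord i j (q + 1)))⁻¹
  have hnext : ¬ cs.IsRightDescent v (if Even (q + 1) then j else i) := by
    intro hv
    apply hmax
    have hv := cs.isRightDescent_iff.mp hv
    rw [alternatingWord_succ' _ _ (q + 1), cs.wordProd_cons, mul_inv_rev, cs.inv_simple,
      ← mul_assoc]
    change cs.length (v * _) + _ = _
    omega
  have hfirst : ¬ cs.IsRightDescent v (if Even q then j else i) := by
    intro hv
    have hw :
        w = v * cs.simple (if Even q then j else i) * cs.wordProd (alternatingWord i j q) := by
      simp [v, alternatingWord_succ' _ _ q, cs.wordProd_cons, mul_assoc]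
    have hle := cs.length_mul_le (v * cs.simple (if Even q then j else i))
      (cs.wordProd (alternatingWord i j q))
    have hq := cs.length_wordProd_le (alternatingWord i j q)
    have hv := cs.isRightDescent_iff.mp hv
    rw [← hw] at hle
    rw [length_alternatingWord] at hq
    omega
  rcases Nat.even_or_odd q with hq | hq
  · rw [if_pos hq] at hfirst
    rw [if_neg (Nat.not_even_iff_odd.mpr hq.add_one)] at hnext
    exact ⟨hnext, hfirst⟩
  · rw [if_neg (Nat.not_even_iff_odd.mpr hq)] at hfirst
    rw [if_pos hq.add_one] at hnext
    exact ⟨hfirst, hnext⟩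

lemma length_alternatingWord_eq_of_suffix {w : W} {i j : B} {q : ℕ}
    (h : cs.length (w * (cs.wordProd (alternatingWord i j q))⁻¹) + q = cs.length w) :
    cs.length (cs.wordProd (alternatingWord i j q)) = q := by
  have hle := cs.length_wordProd_le (alternatingWord i j q)
  have hge := cs.length_mul_le (w * (cs.wordProd (alternatingWord i j q))⁻¹)
    (cs.wordProd (alternatingWord i j q))
  rw [inv_mul_cancel_right] at hge
  rw [length_alternatingWord] at hle
  omega

lemma lt_of_alternatingSuffix {w : W} {i j : B} {q : ℕ} (hi : ¬ cs.IsRightDescent w i)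
    (hM : M i j ≠ 0)
    (h : cs.length (w * (cs.wordProd (alternatingWord i j q))⁻¹) + q = cs.length w) :
    q < M i j := by
  have hred : cs.IsReduced (alternatingWord i j q) := by
    rw [CoxeterSystem.IsReduced, cs.length_alternatingWord_eq_of_suffix h, length_alternatingWord]
  rcases lt_trichotomy q (M i j) with hlt | heq | hgt
  · exact hlt
  · exfalso
    obtain ⟨m, rfl⟩ : ∃ m, q = m + 1 := Nat.exists_eq_add_one.mpr (heq ▸ Nat.pos_of_ne_zero hM)
    -- the braid relation makes `i` the last letter of the suffix
    have hsuffix : cs.wordProd (alternatingWord i j (m + 1)) * cs.simple i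
        = cs.wordProd (alternatingWord i j m) := by
      have hbraid := cs.wordProd_braidWord_eq i j
      rw [braidWord, braidWord, M.symmetric j i, ← heq, alternatingWord_succ j,
        cs.wordProd_concat] at hbraid
      rw [hbraid, mul_assoc, cs.simple_mul_simple_self, mul_one]
    have hle := cs.length_mul_le (w * (cs.wordProd (alternatingWord i j (m + 1)))⁻¹)
      (cs.wordProd (alternatingWord i j (m + 1)) * cs.simple i)
    have hm := cs.length_wordProd_le (alternatingWord i j m)
    rw [← mul_assoc, inv_mul_cancel_right, hsuffix] at hle
    rw [length_alternatingWord] at hm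
    exact hi (show cs.length (w * cs.simple i) < cs.length w by omega)
  · exact absurd hred (cs.not_isReduced_alternatingWord i j hM hgt)

lemma exists_alternatingSuffix {w : W} {i j : B} (hi : ¬ cs.IsRightDescent w i)
    (hj : cs.IsRightDescent w j) :
    ∃ (v : W) (q : ℕ), w = v * cs.wordProd (alternatingWord i j q) ∧ cs.length v < cs.length w ∧
      (M i j ≠ 0 → q < M i j) ∧ ¬ cs.IsRightDescent v i ∧ ¬ cs.IsRightDescent v j := by
  set P : ℕ → Prop :=
    fun q ↦ cs.length (w * (cs.wordProd (alternatingWord i j q))⁻¹) + q = cs.length w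
  have hP1 : P 1 := by
    simpa [P, alternatingWord, cs.inv_simple] using cs.isRightDescent_iff.mp hj
  have hlen : 1 ≤ cs.length w := by
    have := cs.isRightDescent_iff.mp hj
    omega
  set q := Nat.findGreatest P (cs.length w)
  have hq1 : 1 ≤ q := Nat.le_findGreatest hlen hP1
  have hPq : P q := Nat.findGreatest_spec hlen hP1
  have hmax : ¬ P (q + 1) := by
    intro hP
    exact Nat.findGreatest_is_greatest (Nat.lt_succ_self q)
      (by simp only [P] at hP; omega) hP
  obtain ⟨hvi, hvj⟩ := cs.not_isRightDescent_of_alternatingSuffix_maximal hq1 hPq hmax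
  exact ⟨_, q, (inv_mul_cancel_right _ _).symm, by simp only [P] at hPq; omega,
    fun hM ↦ cs.lt_of_alternatingSuffix hi hM hPq, hvi, hvj⟩

end CoxeterSystem

namespace PaperBound

variable {B : Type} {W : Type} [Group W]

section GeometricRepresentation

lemma cB_self {M : CoxeterMatrix B} (i : B) : cB M i i = 1 := by
  simp [cB]

lemma cB_comm {M : CoxeterMatrix B} (i j : B) : cB M i j = cB M j i := by
  simp only [cB, M.symmetric i j]

open Polynomial Chebyshev

/-- `sin ((k + 1) π / m) / sin (π / m)` if `m = M i j` is finite, and `k + 1` if it is infinite. -/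
def dihedralCoeff (M : CoxeterMatrix B) (i j : B) (k : ℤ) : ℝ :=
  (S ℝ k).eval (-2 * cB M i j)

lemma dihedralCoeff_add_one (M : CoxeterMatrix B) (i j : B) (k : ℤ) :
    dihedralCoeff M i j (k + 1)
      = -2 * cB M i j * dihedralCoeff M i j k - dihedralCoeff M i j (k - 1) := by
  simp [dihedralCoeff, S_add_one]

lemma dihedralCoeff_nonneg {M : CoxeterMatrix B} {i j : B} (hij : i ≠ j) {k : ℤ}
    (hk : -1 ≤ k) (hkM : M i j ≠ 0 → k + 1 ≤ M i j) : 0 ≤ dihedralCoeff M i j k := by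
  unfold dihedralCoeff
  by_cases hM : M i j = 0
  · have hcB : -2 * cB M i j = 2 := by norm_num [cB, hM]
    rw [hcB, S_eval_two]
    exact_mod_cast (by omega : (0 : ℤ) ≤ k + 1)
  · set t := Real.pi / (M i j : ℝ)
    have hm : (2 : ℝ) ≤ M i j := by exact_mod_cast (by have := M.off_diagonal i j hij; omega)
    have ht : 0 < t := by positivity
    have hsin : 0 < Real.sin t :=
      Real.sin_pos_of_pos_of_lt_pi ht (div_lt_self Real.pi_pos (by linarith))
    have hkt : ((k : ℝ) + 1) * t ≤ Real.pi := by
      calc ((k : ℝ) + 1) * t ≤ (M i j : ℝ) * t := by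
            gcongr; exact_mod_cast hkM hM
        _ = Real.pi := mul_div_cancel₀ _ (by positivity)
    have hcB : -2 * cB M i j = 2 * Real.cos t := by simp [cB, hM, t]
    rw [hcB, ← mul_nonneg_iff_of_pos_right hsin, S_two_mul_real_cos]
    exact Real.sin_nonneg_of_nonneg_of_le_pi
      (mul_nonneg (by exact_mod_cast (by omega : (0 : ℤ) ≤ k + 1)) ht.le) hkt

variable [Fintype B] [DecidableEq B] {M : CoxeterMatrix B}

lemma pair_sroot (f : B → ℝ) (i : B) : pair f (sroot i) = f i := by
  simp [pair, sroot, Pi.single_apply]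

lemma bform_sroot_smul_add (i j : B) (a b : ℝ) :
    bform M (sroot i) (a • sroot i + b • sroot j) = a + b * cB M i j := by
  simp [bform, sroot, Pi.single_apply, add_mul, Finset.sum_add_distrib, cB_self]

variable {cs : CoxeterSystem M W} {ρ : W →* (B → ℝ) ≃ₗ[ℝ] (B → ℝ)}

lemma IsGeomRep.apply_simple_smul_add (hρ : IsGeomRep M cs ρ) (i j : B) (a b : ℝ) :
    ρ (cs.simple i) (a • sroot i + b • sroot j)
      = (-2 * cB M i j * b - a) • sroot i + b • sroot j := by
  rw [hρ i, bform_sroot_smul_add]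
  module

lemma IsGeomRep.apply_simple_smul_add' (hρ : IsGeomRep M cs ρ) (i j : B) (a b : ℝ) :
    ρ (cs.simple j) (a • sroot i + b • sroot j)
      = a • sroot i + (-2 * cB M i j * a - b) • sroot j := by
  rw [add_comm, hρ.apply_simple_smul_add, cB_comm, add_comm]

open CoxeterSystem

lemma IsGeomRep.apply_alternatingWord_odd (hρ : IsGeomRep M cs ρ) (i j : B) (k : ℕ)
    (h : ρ (cs.wordProd (alternatingWord i j (2 * k))) (sroot i)
      = dihedralCoeff M i j (2 * k) • sroot i + dihedralCoeff M i j (2 * k - 1) • sroot j) :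
    ρ (cs.wordProd (alternatingWord i j (2 * k + 1))) (sroot i)
      = dihedralCoeff M i j (2 * k) • sroot i + dihedralCoeff M i j (2 * k + 1) • sroot j := by
  rw [alternatingWord_succ', if_pos (even_two_mul k), cs.wordProd_cons, map_mul,
    LinearEquiv.mul_apply, h, hρ.apply_simple_smul_add', dihedralCoeff_add_one]

lemma IsGeomRep.apply_alternatingWord_even (hρ : IsGeomRep M cs ρ) (i j : B) (k : ℕ) :
    ρ (cs.wordProd (alternatingWord i j (2 * k))) (sroot i)
      = dihedralCoeff M i j (2 * k) • sroot i + dihedralCoeff M i j (2 * k - 1) • sroot j := by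
  induction k with
  | zero => simp [alternatingWord, dihedralCoeff]
  | succ k ih =>
    rw [show 2 * (k + 1) = 2 * k + 1 + 1 by ring, alternatingWord_succ',
      if_neg (Nat.not_even_two_mul_add_one k), cs.wordProd_cons, map_mul,
      LinearEquiv.mul_apply, hρ.apply_alternatingWord_odd i j k ih, hρ.apply_simple_smul_add]
    push_cast
    rw [show 2 * ((k : ℤ) + 1) = 2 * k + 1 + 1 by ring, dihedralCoeff_add_one M i j (2 * k + 1),
      add_sub_cancel_right, add_sub_cancel_right]

lemma IsGeomRep.exists_nonneg_apply_alternatingWord (hρ : IsGeomRep M cs ρ) {i j : B}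
    (hij : i ≠ j) {q : ℕ} (hq : M i j ≠ 0 → q < M i j) :
    ∃ a b : ℝ, 0 ≤ a ∧ 0 ≤ b ∧
      ρ (cs.wordProd (alternatingWord i j q)) (sroot i) = a • sroot i + b • sroot j := by
  have hcoeff : ∀ l : ℤ, -1 ≤ l → l ≤ q → 0 ≤ dihedralCoeff M i j l :=
    fun l hl hlq ↦ dihedralCoeff_nonneg hij hl fun hM ↦ by have := hq hM; omega
  obtain ⟨k, rfl | rfl⟩ := Nat.even_or_odd' q
  · exact ⟨_, _, hcoeff _ (by omega) (by omega), hcoeff _ (by omega) (by omega),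
      hρ.apply_alternatingWord_even i j k⟩
  · exact ⟨_, _, hcoeff _ (by omega) (by omega), hcoeff _ (by omega) (by push_cast; omega),
      hρ.apply_alternatingWord_odd i j k (hρ.apply_alternatingWord_even i j k)⟩

theorem IsGeomRep.apply_sroot_nonneg (hρ : IsGeomRep M cs ρ) {w : W} {i : B}
    (hi : ¬ cs.IsRightDescent w i) (b : B) : 0 ≤ ρ w (sroot i) b := by
  induction hn : cs.length w using Nat.strong_induction_on generalizing w i b with
  | _ n ih =>
  rcases eq_or_ne w 1 with rfl | hw
  · rw [map_one]
    exact (show (0 : B → ℝ) ≤ sroot i from Pi.single_nonneg.mpr zero_le_one) b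
  obtain ⟨j, hj⟩ := cs.exists_rightDescent_of_ne_one hw
  have hij : i ≠ j := by rintro rfl; exact hi hj
  obtain ⟨v, q, rfl, hlt, hq, hvi, hvj⟩ := cs.exists_alternatingSuffix hi hj
  obtain ⟨a, c, ha, hc, hav⟩ := hρ.exists_nonneg_apply_alternatingWord hij hq
  rw [map_mul, LinearEquiv.mul_apply, hav, map_add, map_smul, map_smul]
  exact add_nonneg (mul_nonneg ha (ih _ (hn ▸ hlt) hvi b rfl))
    (mul_nonneg hc (ih _ (hn ▸ hlt) hvj b rfl))

end GeometricRepresentation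

section Chambers

variable [Fintype B] {ρ π : W →* (B → ℝ) ≃ₗ[ℝ] (B → ℝ)}

lemma IsContraRep.pair_apply (hπ : IsContraRep ρ π) (w : W) (f v : B → ℝ) :
    pair (π w f) v = pair f (ρ w⁻¹ v) := by
  simpa [← LinearEquiv.mul_apply, ← map_mul] using hπ w f (ρ w⁻¹ v)

variable [DecidableEq B] {M : CoxeterMatrix B} {cs : CoxeterSystem M W}

lemma pair_pos_of_mem_domCham {f v : B → ℝ} (hf : f ∈ domCham B) (hv : 0 ≤ v) (hv0 : v ≠ 0) :
    0 < pair f v := by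
  obtain ⟨b, hb⟩ := Function.ne_iff.mp hv0
  refine Finset.sum_pos' (fun i _ ↦ mul_nonneg ?_ (hv i)) ⟨b, Finset.mem_univ b, mul_pos ?_ ?_⟩
  · exact (pair_sroot f i ▸ hf i).le
  · exact pair_sroot f b ▸ hf b
  · exact (hv b).lt_of_ne' hb

lemma IsGeomRep.pair_apply_sroot_pos (hρ : IsGeomRep M cs ρ) (hπ : IsContraRep ρ π)
    {z y : W} {i : B} (hi : ¬ cs.IsRightDescent (z⁻¹ * y) i) {f : B → ℝ} (hf : f ∈ cham π z) :
    0 < pair f (ρ y (sroot i)) := by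
  obtain ⟨f₀, hf₀, rfl⟩ := hf
  rw [hπ.pair_apply, ← LinearEquiv.mul_apply, ← map_mul]
  refine pair_pos_of_mem_domCham hf₀ (fun b ↦ hρ.apply_sroot_nonneg hi b) ?_
  simp [sroot]

end Chambers

section Words

variable {M : CoxeterMatrix B} (cs : CoxeterSystem M W) (x : W) {ω : List B} {p : ℕ}
  {ι : Fin p → Fin ω.length}

lemma omitProd_zero (h : 0 < p) : omitProd cs x ω ι ⟨0, h⟩ = xseq cs x ω ι ⟨0, h⟩ := by
  rw [omitProd, xseq, List.map_get_filter_finRange_of_iff ω (a := 0), List.drop_zero]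
  have hmin : ∀ m : Fin p, ¬ m < ⟨0, h⟩ := fun m hm ↦ Nat.not_lt_zero _ hm
  simp [hmin]

lemma lt_and_forall_ne_succ_iff (hι : StrictMono ι) {n : ℕ} (h : n + 1 < p)
    (j : Fin ω.length) :
    ((j : ℕ) < ι ⟨n + 1, h⟩ ∧ ∀ m : Fin p, m < ⟨n + 1, h⟩ → j ≠ ι m) ↔
      ((j : ℕ) < ι ⟨n, by omega⟩ ∧ ∀ m : Fin p, m < ⟨n, by omega⟩ → j ≠ ι m) ∨
        (ι ⟨n, by omega⟩ + 1 ≤ (j : ℕ) ∧ (j : ℕ) < ι ⟨n + 1, h⟩) := by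
  have hn : (⟨n, by omega⟩ : Fin p) < ⟨n + 1, h⟩ := Fin.mk_lt_mk.mpr n.lt_succ_self
  have hlt : ι ⟨n, by omega⟩ < ι ⟨n + 1, h⟩ := hι hn
  constructor
  · rintro ⟨hjb, hne⟩
    rcases lt_or_gt_of_ne (Fin.val_ne_of_ne (hne _ hn)) with hja | hja
    · exact Or.inl ⟨hja, fun m hm ↦ hne m (hm.trans hn)⟩
    · exact Or.inr ⟨hja, hjb⟩
  · rintro (⟨hja, hne⟩ | ⟨hja, hjb⟩)
    · refine ⟨hja.trans hlt, fun m hm ↦ ?_⟩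
      rcases Nat.lt_succ_iff_lt_or_eq.mp (Fin.lt_def.mp hm) with hmn | rfl
      · exact hne m hmn
      · exact fun hj ↦ hja.ne (congrArg Fin.val hj)
    · refine ⟨hjb, fun m hm hj ↦ ?_⟩
      have : ι m ≤ ι ⟨n, by omega⟩ := hι.monotone (Fin.mk_le_mk.mpr (Nat.lt_succ_iff.mp hm))
      rw [← hj] at this
      exact absurd (Fin.le_def.mp this) (by omega)

lemma omitProd_succ (hι : StrictMono ι) {n : ℕ} (h : n + 1 < p) :
    omitProd cs x ω ι ⟨n + 1, h⟩ = omitProd cs x ω ι ⟨n, by omega⟩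
      * cs.wordProd ((ω.take (ι ⟨n + 1, h⟩)).drop (ι ⟨n, by omega⟩ + 1)) := by
  rw [omitProd, omitProd, mul_assoc,
    List.filter_finRange_eq_append (c := ι ⟨n, by omega⟩ + 1)
      (p := fun j ↦ decide ((j : ℕ) < ι ⟨n, by omega⟩ ∧ ∀ m : Fin p, m < ⟨n, by omega⟩ → j ≠ ι m))
      (q := fun j ↦ decide (ι ⟨n, by omega⟩ + 1 ≤ (j : ℕ) ∧ (j : ℕ) < ι ⟨n + 1, h⟩))
      (fun j ↦ by
        rw [← Bool.decide_or]; exact decide_eq_decide.mpr (lt_and_forall_ne_succ_iff hι h j))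
      (fun j hj ↦ by simp at hj; omega) (fun j hj ↦ by simp at hj; omega),
    List.map_append, cs.wordProd_append]
  congr 2
  exact congrArg cs.wordProd (List.map_get_filter_finRange_of_iff ω fun j ↦ by simp)

lemma xseq_succ (hι : StrictMono ι) {n : ℕ} (h : n + 1 < p) :
    xseq cs x ω ι ⟨n + 1, h⟩ = xseq cs x ω ι ⟨n, by omega⟩ * cs.simple (ω.get (ι ⟨n, by omega⟩))
      * cs.wordProd ((ω.take (ι ⟨n + 1, h⟩)).drop (ι ⟨n, by omega⟩ + 1)) := by
  have hn : (⟨n, by omega⟩ : Fin p) < ⟨n + 1, h⟩ := Fin.mk_lt_mk.mpr n.lt_succ_self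
  rw [xseq, xseq, cs.wordProd_take_eq ω (hι hn) (ι _).isLt.le]
  simp [mul_assoc]

lemma eseq_succ {n : ℕ} (h : n < p) :
    eseq cs x ω ι (n + 1) = sigmaseq cs x ω ι ⟨n, h⟩ * eseq cs x ω ι n := by
  rw [eseq, dif_pos h]

lemma sigmaseq_mul_xseq (n : Fin p) :
    sigmaseq cs x ω ι n * xseq cs x ω ι n = xseq cs x ω ι n * cs.simple (ω.get (ι n)) := by
  rw [sigmaseq, inv_mul_cancel_right]

lemma xseq_eq_eseq_mul_omitProd (hι : StrictMono ι) {n : ℕ} (h : n < p) :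
    xseq cs x ω ι ⟨n, h⟩ = eseq cs x ω ι n * omitProd cs x ω ι ⟨n, h⟩ := by
  induction n with
  | zero => rw [eseq, one_mul, omitProd_zero]
  | succ n ih =>
    rw [xseq_succ cs x hι h, ← sigmaseq_mul_xseq, ih, omitProd_succ cs x hι h,
      eseq_succ cs x (by omega)]
    simp only [mul_assoc]

lemma eseq_inv_mul_xseq (hι : StrictMono ι) {n : ℕ} (h : n < p) :
    (eseq cs x ω ι (n + 1))⁻¹ * xseq cs x ω ι ⟨n, h⟩
      = omitProd cs x ω ι ⟨n, h⟩ * cs.simple (ω.get (ι ⟨n, h⟩)) := by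
  have hσ : (sigmaseq cs x ω ι ⟨n, h⟩)⁻¹ * xseq cs x ω ι ⟨n, h⟩
      = xseq cs x ω ι ⟨n, h⟩ * cs.simple (ω.get (ι ⟨n, h⟩)) := by
    rw [sigmaseq, mul_inv_rev, mul_inv_rev, inv_inv, cs.inv_simple, ← mul_assoc,
      inv_mul_cancel_right]
  rw [eseq_succ cs x h, mul_inv_rev, mul_assoc, hσ, xseq_eq_eseq_mul_omitProd cs x hι h,
    mul_assoc, inv_mul_cancel_left]

end Words

/-- for `1 ≤ n ≤ p`, the chambers `x₁C` and `e_nC` lie on the same side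
of `H_n`. -/
theorem statement13 [Fintype B] [DecidableEq B] {M : CoxeterMatrix B}
    (cs : CoxeterSystem M W) (ρ π : W →* (B → ℝ) ≃ₗ[ℝ] (B → ℝ))
    (hρ : IsGeomRep M cs ρ) (hπ : IsContraRep ρ π)
    (x : W) (ω : List B) (hred : cs.IsReduced ω)
    (p : ℕ) (ι : Fin p → Fin ω.length) (hι : StrictMono ι)
    (hdesc : DescCond cs x ω ι)
    (n : ℕ) (hn1 : 1 ≤ n) (hnp : n ≤ p) :
    ∀ f ∈ cham π (xseq cs x ω ι ⟨0, by omega⟩),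
      ∀ g ∈ cham π (eseq cs x ω ι n),
        ¬ SepPt (rootseq cs ρ x ω ι ⟨n - 1, by omega⟩) f g := by
  intro f hf g hg
  obtain ⟨k, rfl⟩ : ∃ k, n = k + 1 := ⟨n - 1, by omega⟩
  simp only [Nat.add_sub_cancel]
  have hf_pos : 0 < pair f (rootseq cs ρ x ω ι ⟨k, by omega⟩) := by
    refine hρ.pair_apply_sroot_pos hπ ?_ hf
    simpa [xseq, mul_assoc] using cs.not_isRightDescent_wordProd_take hred
      (hι.monotone (Fin.mk_le_mk.mpr k.zero_le)) (ι ⟨k, by omega⟩).isLt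
  have hg_pos : 0 < pair g (rootseq cs ρ x ω ι ⟨k, by omega⟩) := by
    refine hρ.pair_apply_sroot_pos hπ ?_ hg
    rw [eseq_inv_mul_xseq cs x hι]
    exact cs.isRightDescent_iff_not_isRightDescent_mul.mp (hdesc _)
  exact (mul_pos hf_pos hg_pos).not_gt

end PaperBound
end
end

section
/- Fix a chamber wC (w ∈ W) and for P ∈ 𝔓 write P^{−} := {f ∈ V* : ⟨f, α_P⟩⟨f₀, α_P⟩ < 0 for all f₀ ∈ wC} (the open half-space bounded by P not containing wC). Let H, Q ∈ 𝔓 with Q ≠ H and let σ_H be the reflection in H. Suppose there exist g₁, g₂ ∈ H^{−} ∩ (σ_H(Q))^{−} such that Q separates g₁ and g₂. Then Q ∩ H^{−} = Q ∩ (σ_H(Q))^{−}. -/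
/-!
The reflection σ_H moves α_Q along α_H: σ_H(α_Q) = α_Q + c α_H for some real c. On Q the
functional ⟨·, σ_H(α_Q)⟩ is therefore c ⟨·, α_H⟩, so both half-spaces cut out the same part of Q
exactly when c ⟨f₀, α_H⟩ ⟨f₀, σ_H(α_Q)⟩ > 0 for f₀ ∈ wC. If this product were ≤ 0, every point
lying in H⁻ ∩ (σ_H(Q))⁻ would lie on one fixed side of Q, which the separated pair g₁, g₂ rules out.
-/

noncomputable section

namespace PaperBound

variable {B : Type} {W : Type} [Group W]

lemma pair_add_smul [Fintype B] (f u v : B → ℝ) (c : ℝ) :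
    pair f (u + c • v) = pair f u + c * pair f v := by
  change f ⬝ᵥ (u + c • v) = f ⬝ᵥ u + c * (f ⬝ᵥ v)
  rw [dotProduct_add, dotProduct_smul, smul_eq_mul]

lemma IsGeomRep.exists_conj_simple_apply_eq_add_smul [Fintype B] [DecidableEq B]
    {M : CoxeterMatrix B} {cs : CoxeterSystem M W} {ρ : W →* (B → ℝ) ≃ₗ[ℝ] (B → ℝ)}
    (hρ : IsGeomRep M cs ρ) (w' : W) (i : B) (v : B → ℝ) :
    ∃ c : ℝ, ρ (w' * cs.simple i * w'⁻¹) v = v + c • ρ w' (sroot i) := by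
  refine ⟨-(2 * bform M (sroot i) (ρ w'⁻¹ v)), ?_⟩
  have hinv : ρ w' (ρ w'⁻¹ v) = v := by
    rw [← LinearEquiv.mul_apply, ← map_mul, mul_inv_cancel, map_one, LinearEquiv.coe_one, id]
  rw [map_mul, map_mul, LinearEquiv.mul_apply, LinearEquiv.mul_apply, hρ, map_sub, map_smul,
    hinv, neg_smul, ← sub_eq_add_neg]

lemma mul_neg_of_mul_mul_nonpos {a c d h q : ℝ} (hha : h * a < 0) (hb : (q + c * h) * d < 0)
    (hcad : c * a * d ≤ 0) : q * d < 0 := by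
  have ha : 0 < a ^ 2 := sq_pos_of_ne_zero (right_ne_zero_of_mul hha.ne)
  have hqda : q * d * a ^ 2 < 0 := by
    have h₁ : (q + c * h) * d * a ^ 2 < 0 := mul_neg_of_neg_of_pos hb ha
    have h₂ : 0 ≤ h * a * (c * a * d) := mul_nonneg_of_nonpos_of_nonpos hha.le hcad
    linear_combination h₁ + h₂
  exact neg_of_mul_neg_left hqda ha.le

lemma mul_mul_pos_of_mul_neg {a c d h₁ h₂ q₁ q₂ : ℝ} (ha₁ : h₁ * a < 0) (ha₂ : h₂ * a < 0)
    (hb₁ : (q₁ + c * h₁) * d < 0) (hb₂ : (q₂ + c * h₂) * d < 0) (hq : q₁ * q₂ < 0) :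
    0 < c * a * d := by
  by_contra! hcad
  have hd : 0 < q₁ * d * (q₂ * d) :=
    mul_pos_of_neg_of_neg (mul_neg_of_mul_mul_nonpos ha₁ hb₁ hcad)
      (mul_neg_of_mul_mul_nonpos ha₂ hb₂ hcad)
  nlinarith [sq_nonneg d]

lemma mul_neg_iff_mul_mul_neg {a c d : ℝ} (hcad : 0 < c * a * d) (x : ℝ) :
    x * a < 0 ↔ c * x * d < 0 := by
  have hcd : 0 < (c * d) ^ 2 :=
    sq_pos_of_ne_zero (mul_ne_zero (left_ne_zero_of_mul (left_ne_zero_of_mul hcad.ne'))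
      (right_ne_zero_of_mul hcad.ne'))
  have key : x * a * (c * d) ^ 2 = c * x * d * (c * a * d) := by ring
  constructor
  · intro hxa
    exact neg_of_mul_neg_left (key ▸ mul_neg_of_neg_of_pos hxa hcd) hcad.le
  · intro hcxd
    exact neg_of_mul_neg_left (key ▸ mul_neg_of_neg_of_pos hcxd hcad) hcd.le

lemma hyp_inter_halfNeg_eq_add_smul [Fintype B] [DecidableEq B]
    (π : W →* (B → ℝ) ≃ₗ[ℝ] (B → ℝ)) (w : W) (αH αQ : B → ℝ) (c : ℝ) {g₁ g₂ : B → ℝ}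
    (hg₁ : g₁ ∈ halfNeg π w αH ∩ halfNeg π w (αQ + c • αH))
    (hg₂ : g₂ ∈ halfNeg π w αH ∩ halfNeg π w (αQ + c • αH))
    (hsep : SepPt αQ g₁ g₂) :
    hyp αQ ∩ halfNeg π w αH = hyp αQ ∩ halfNeg π w (αQ + c • αH) := by
  ext f
  refine and_congr_right fun hf => forall₂_congr fun f₀ hf₀ => ?_
  have hcad : 0 < c * pair f₀ αH * pair f₀ (αQ + c • αH) := by
    refine mul_mul_pos_of_mul_neg (hg₁.1 f₀ hf₀) (hg₂.1 f₀ hf₀) ?_ ?_ hsep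
    · rw [← pair_add_smul]; exact hg₁.2 f₀ hf₀
    · rw [← pair_add_smul]; exact hg₂.2 f₀ hf₀
  rw [pair_add_smul f, show pair f αQ = 0 from hf, zero_add]
  exact mul_neg_iff_mul_mul_neg hcad _

theorem statement18_general [Fintype B] [DecidableEq B] {M : CoxeterMatrix B}
    (cs : CoxeterSystem M W) (ρ π : W →* (B → ℝ) ≃ₗ[ℝ] (B → ℝ))
    (hρ : IsGeomRep M cs ρ)
    (w : W)
    (αH αQ : B → ℝ)
    (w' : W) (i : B) (hw' : αH = ρ w' (sroot i))
    (g₁ g₂ : B → ℝ)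
    (hg₁ : g₁ ∈ halfNeg π w αH ∩ halfNeg π w (ρ (w' * cs.simple i * w'⁻¹) αQ))
    (hg₂ : g₂ ∈ halfNeg π w αH ∩ halfNeg π w (ρ (w' * cs.simple i * w'⁻¹) αQ))
    (hsep : SepPt αQ g₁ g₂) :
    hyp αQ ∩ halfNeg π w αH =
      hyp αQ ∩ halfNeg π w (ρ (w' * cs.simple i * w'⁻¹) αQ) := by
  obtain ⟨c, hc⟩ := hρ.exists_conj_simple_apply_eq_add_smul w' i αQ
  rw [← hw'] at hc
  rw [hc] at hg₁ hg₂ ⊢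
  exact hyp_inter_halfNeg_eq_add_smul π w αH αQ c hg₁ hg₂ hsep

/-- fix a chamber `wC` and write `P⁻` for the open half-space bounded by
`P` not containing `wC`. Let `H = H_{α_H}, Q = H_{α_Q} ∈ 𝔓` with `Q ≠ H`, where
`α_H = w′·α_i` and `σ_H = w′ s_i w′⁻¹`. If there are `g₁, g₂ ∈ H⁻ ∩ (σ_H(Q))⁻` with `Q`
separating `g₁` and `g₂`, then `Q ∩ H⁻ = Q ∩ (σ_H(Q))⁻`. -/
theorem statement18 [Fintype B] [DecidableEq B] {M : CoxeterMatrix B}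
    (cs : CoxeterSystem M W) (ρ π : W →* (B → ℝ) ≃ₗ[ℝ] (B → ℝ))
    (hρ : IsGeomRep M cs ρ) (hπ : IsContraRep ρ π)
    (w : W)
    (αH αQ : B → ℝ) (hαH : αH ∈ PhiPos ρ) (hαQ : αQ ∈ PhiPos ρ)
    (hne : hyp αQ ≠ hyp αH)
    (w' : W) (i : B) (hw' : αH = ρ w' (sroot i))
    (g₁ g₂ : B → ℝ)
    (hg₁ : g₁ ∈ halfNeg π w αH ∩ halfNeg π w (ρ (w' * cs.simple i * w'⁻¹) αQ))
    (hg₂ : g₂ ∈ halfNeg π w αH ∩ halfNeg π w (ρ (w' * cs.simple i * w'⁻¹) αQ))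
    (hsep : SepPt αQ g₁ g₂) :
    hyp αQ ∩ halfNeg π w αH =
      hyp αQ ∩ halfNeg π w (ρ (w' * cs.simple i * w'⁻¹) αQ) :=
  statement18_general cs ρ π hρ w αH αQ w' i hw' g₁ g₂ hg₁ hg₂ hsep

end PaperBound
end
end
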